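/- If a system S is reachable under the rollback semantics from an initial system ⟨∅, ∅, [], (p, s)⟩ by applying only forward rules, then applying the projection sta to each step of the derivation yields a valid derivation under the standard semantics (each rollback-semantics step maps to either a standard-semantics step or an identity on projected systems). -/

import Mathlib

abbrev Pid := ℕ
abbrev Tag := ℕ
abbrev Ckpt := ℕ
abbrev Val := ℕ

/-- Local (process-level) semantics, given as abstract relations on states. -/
structure LocalSem (State : Type) where
  seqS : State → State → Prop
  sendS : State → Pid → Val → State → Prop
  recS : State → Val → State → Prop
  spawnS : State → State → Pid → State → Prop
  checkS : State → Ckpt → State → Prop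
  commitS : State → Ckpt → State → Prop
  rollbackS : State → Ckpt → State → Prop


inductive SComp (State : Type) where
  | proc : Pid → State → SComp State
  | msg : Pid → Pid → Val → SComp State

/-- A system: parallel composition modulo associativity/commutativity = multiset. -/
abbrev SSys (State : Type) := Multiset (SComp State)

def sids {State : Type} : SComp State → Finset Pid
  | .proc p _ => {p}
  | .msg p p' _ => {p, p'}

/-- The set of pids occurring in a system. -/
def idsS {State : Type} (S : SSys State) : Finset Pid := (S.map sids).sup

inductive SLabel where
  | seq : Pid → SLabel
  | send : Pid → SLabel
  | recv : Pid → SLabel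
  | spawn : Pid → Pid → SLabel
deriving DecidableEq

inductive SStep {State : Type} (L : LocalSem State) : SSys State → SLabel → SSys State → Prop where
  | seq {p s s'} : L.seqS s s' →
      SStep L {SComp.proc p s} (.seq p) {SComp.proc p s'}
  | send {p p' v s s'} : L.sendS s p' v s' →
      SStep L {SComp.proc p s} (.send p) {SComp.msg p p' v, SComp.proc p s'}
  | recv {p p' v s s'} : L.recS s v s' →
      SStep L {SComp.msg p' p v, SComp.proc p s} (.recv p) {SComp.proc p s'}
  | spawn {p p' s s₀ s'} : L.spawnS s s₀ p' s' → p' ≠ p →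
      SStep L {SComp.proc p s} (.spawn p p') {SComp.proc p s', SComp.proc p' s₀}
  | par {S₁ l S₁' S₂} : SStep L S₁ l S₁' → Disjoint (idsS S₁') (idsS S₂) →
      SStep L (S₁ + S₂) l (S₁' + S₂)


inductive Item (State : Type) where
  | seq : State → Item State
  | send : State → Pid → Tag → Item State
  | recv : Finset Ckpt → Finset Ckpt → State → Pid → Tag → Val → Item State
  | spawn : State → Pid → Item State
  | check : Ckpt → State → Item State
  | commit : Ckpt → State → Item State
deriving DecidableEq

abbrev Hist (State : Type) := List (Item State)

abbrev Delayed (State : Type) := Ckpt × Hist State × Finset Pid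

def addC {State : Type} (C : Finset Ckpt) (a : Item State) (h : Hist State) : Hist State :=
  if C = ∅ then h else a :: h

/-- last_τ(h): the first check/rec item in h is check(τ,·) or a rec item whose
    forced-checkpoint set contains τ. -/
def lastCk {State : Type} (τ : Ckpt) : Hist State → Prop
  | [] => False
  | .check τ' _ :: _ => τ' = τ
  | .recv C _ _ _ _ _ :: _ => τ ∈ C
  | _ :: h => lastCk τ h

def itemDp {State : Type} : Item State → Finset Pid
  | .send _ p _ => {p}
  | .spawn _ p => {p}
  | _ => ∅

/-- dp_τ(h): the pids causally dependent on the process according to its history. -/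
def dpH {State : Type} (h : Hist State) : Finset Pid := (h.map itemDp).foldr (· ∪ ·) ∅


inductive RComp (State : Type) [DecidableEq State] where
  | fwd : Finset Ckpt → Finset (Delayed State) → Hist State → Pid → State → RComp State
  | bwd : Finset Ckpt → Finset (Delayed State) → Hist State → Pid → State → Ckpt → RComp State
  | msg : Finset Ckpt → Pid → Pid → Tag → Val → RComp State

abbrev RSys (State : Type) [DecidableEq State] := Multiset (RComp State)

variable {State : Type} [DecidableEq State]

/-- Remove τ from the active checkpoint set of a component. -/
def eraseCk (τ : Ckpt) : RComp State → RComp State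
  | .fwd C D h p s => .fwd (C.erase τ) D h p s
  | .bwd C D h p s τ' => .bwd (C.erase τ) D h p s τ'
  | .msg C p p' l v => .msg (C.erase τ) p p' l v

/-- Commit propagation: each component of the system either stays unchanged or has
    τ removed from its active checkpoint set. -/
def RemTau (τ : Ckpt) (S S' : RSys State) : Prop :=
  Multiset.Rel (fun c c' => c' = c ∨ c' = eraseCk τ c) S S'

def itemTags : Item State → Finset Tag
  | .send _ _ l => {l}
  | .recv _ _ _ _ l _ => {l}
  | _ => ∅

def itemCks : Item State → Finset Ckpt
  | .recv C C' _ _ _ _ => C ∪ C'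
  | .check τ _ => {τ}
  | .commit τ _ => {τ}
  | _ => ∅

def histTags (h : Hist State) : Finset Tag := (h.map itemTags).foldr (· ∪ ·) ∅
def histCks (h : Hist State) : Finset Ckpt := (h.map itemCks).foldr (· ∪ ·) ∅

def compTags : RComp State → Finset Tag
  | .fwd _ _ h _ _ => histTags h
  | .bwd _ _ h _ _ _ => histTags h
  | .msg _ _ _ l _ => {l}

def compCks : RComp State → Finset Ckpt
  | .fwd C D h _ _ => C ∪ histCks h ∪ D.image (·.1)
  | .bwd C D h _ _ τ => C ∪ histCks h ∪ D.image (·.1) ∪ {τ}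
  | .msg C _ _ _ _ => C

def compPids : RComp State → Finset Pid
  | .fwd _ _ h p _ => insert p (dpH h)
  | .bwd _ _ h p _ _ => insert p (dpH h)
  | .msg _ p p' _ _ => {p, p'}

def sysTags (S : RSys State) : Finset Tag := (S.map compTags).sup
def sysCks (S : RSys State) : Finset Ckpt := (S.map compCks).sup
def sysPids (S : RSys State) : Finset Pid := (S.map compPids).sup

inductive RLabel where
  | seq : Pid → RLabel
  | send : Pid → Tag → RLabel
  | recv : Pid → Tag → RLabel
  | spawn : Pid → Pid → RLabel
  | check : Pid → Ckpt → RLabel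
  | commit : Pid → Ckpt → RLabel
  | delay : Pid → Ckpt → RLabel
  | rollback : Pid → Ckpt → RLabel
  | bseq : Pid → RLabel
  | bsend : Pid → Tag → RLabel
  | brec : Pid → Tag → RLabel
  | bspawn : Pid → Pid → RLabel
  | bcheck : Pid → Ckpt → RLabel
  | bcommit : Pid → Ckpt → RLabel
  | flip : Pid → RLabel      -- propagation of the rollback mode (silent steps)
deriving DecidableEq

/-- The rollback semantics: forward rules (Fig. 4) and backward rules (Fig. 5). -/
inductive RStep (L : LocalSem State) : RSys State → RLabel → RSys State → Prop where
  -- forward rules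
  | seq {C D h p s s'} : L.seqS s s' →
      RStep L {RComp.fwd C D h p s} (.seq p)
        {RComp.fwd C D (addC C (.seq s) h) p s'}
  | send {C D h p p' v s s'} (l : Tag) : L.sendS s p' v s' → l ∉ histTags h →
      RStep L {RComp.fwd C D h p s} (.send p l)
        {RComp.msg C p p' l v, RComp.fwd C D (addC C (.send s p' l) h) p s'}
  | recv {C C' D h p p' l v s s'} : L.recS s v s' →
      RStep L {RComp.msg C' p' p l v, RComp.fwd C D h p s} (.recv p l)
        {RComp.fwd (C ∪ C') D (addC C (.recv (C' \ C) C' s p' l v) h) p s'}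
  | spawn {C D h p p' s s₀ s'} : L.spawnS s s₀ p' s' → p' ≠ p →
      RStep L {RComp.fwd C D h p s} (.spawn p p')
        {RComp.fwd C D (addC C (.spawn s p') h) p s', RComp.fwd C ∅ [] p' s₀}
  | check {C D h p s s' τ} : L.checkS s τ s' → τ ∉ C →
      RStep L {RComp.fwd C D h p s} (.check p τ)
        {RComp.fwd (insert τ C) D (.check τ s :: h) p s'}
  | commit {C D h p s s' τ Rest Rest'} : L.commitS s τ s' → lastCk τ h → RemTau τ Rest Rest' →
      RStep L ({RComp.fwd C D h p s} + Rest) (.commit p τ)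
        ({RComp.fwd (C.erase τ) D (.commit τ s :: h) p s'} + Rest')
  | commitDelay {C D h p s s' τ} : L.commitS s τ s' → ¬ lastCk τ h →
      RStep L {RComp.fwd C D h p s} (.delay p τ)
        {RComp.fwd (C.erase τ) (insert (τ, h, dpH h) D) (.commit τ s :: h) p s'}
  | delay {C D h p s τ h' P Rest Rest'} : (τ, h', P) ∈ D → lastCk τ h' → RemTau τ Rest Rest' →
      RStep L ({RComp.fwd C D h p s} + Rest) (.delay p τ)
        ({RComp.fwd C (D.erase (τ, h', P)) h p s} + Rest')
  | rollback {C D h p s s' τ} : L.rollbackS s τ s' →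
      RStep L {RComp.fwd C D h p s} (.rollback p τ) {RComp.bwd C D h p s' τ}
  -- backward rules
  | bseq {C D h p s s' τ} : τ ∈ C →
      RStep L {RComp.bwd C D (.seq s :: h) p s' τ} (.bseq p) {RComp.bwd C D h p s τ}
  | bsend1 {C D h p p' l v s s' τ} : τ ∈ C →
      RStep L {RComp.msg C p p' l v, RComp.bwd C D (.send s p' l :: h) p s' τ}
        (.bsend p l) {RComp.bwd C D h p s τ}
  | bsend2 {C D h p p' l s s' τ C' D' h' s''} : τ ∈ C →
      (∃ C₁ C₂ s₁ v, Item.recv C₁ C₂ s₁ p l v ∈ h') →   -- the message was received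
      RStep L {RComp.bwd C D (.send s p' l :: h) p s' τ, RComp.fwd C' D' h' p' s''}
        (.flip p')
        {RComp.bwd C D (.send s p' l :: h) p s' τ, RComp.bwd C' D' h' p' s'' τ}
  | brec1 {C C' C'' D h p p' l v s s' τ} : τ ∈ C ∪ C' → τ ∈ C'' →
      RStep L {RComp.bwd (C ∪ C') D (.recv C'' C' s p' l v :: h) p s' τ} (.brec p l)
        {RComp.msg C' p' p l v, RComp.fwd C D h p s}
  | brec2 {C C' C'' D h p p' l v s s' τ} : τ ∈ C ∪ C' → τ ∉ C'' →
      RStep L {RComp.bwd (C ∪ C') D (.recv C'' C' s p' l v :: h) p s' τ} (.brec p l)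
        {RComp.msg C' p' p l v, RComp.bwd C D h p s τ}
  | bspawn1 {C D h p p' s s' s₀ τ} : τ ∈ C →
      RStep L {RComp.bwd C D (.spawn s p' :: h) p s' τ, RComp.bwd C ∅ [] p' s₀ τ}
        (.bspawn p p') {RComp.bwd C D h p s τ}
  | bspawn2 {C D h p p' s s' τ C' D' h' s''} : τ ∈ C →
      RStep L {RComp.bwd C D (.spawn s p' :: h) p s' τ, RComp.fwd C' D' h' p' s''}
        (.flip p')
        {RComp.bwd C D (.spawn s p' :: h) p s' τ, RComp.bwd C' D' h' p' s'' τ}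
  | bcheck1 {C D h p s s' τ} :
      RStep L {RComp.bwd C D (.check τ s :: h) p s' τ} (.bcheck p τ)
        {RComp.fwd (C.erase τ) D h p s}
  | bcheck2 {C D h p s s' τ τ'} : τ ≠ τ' → τ ∈ C →
      RStep L {RComp.bwd C D (.check τ' s :: h) p s' τ} (.bcheck p τ')
        {RComp.bwd (C.erase τ') D h p s τ}
  | bcommit1 {C D h p s s' τ τ'} : τ ∈ C → (∀ h' P, (τ', h', P) ∉ D) →
      RStep L {RComp.bwd C D (.commit τ' s :: h) p s' τ} (.bcommit p τ')
        {RComp.bwd (insert τ' C) D h p s τ}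
  | bcommit2 {C D h p s s' τ τ' h' P} : τ ∈ C → (τ', h', P) ∈ D →
      RStep L {RComp.bwd C D (.commit τ' s :: h) p s' τ} (.bcommit p τ')
        {RComp.bwd (insert τ' C) (D.erase (τ', h', P)) h p s τ}
  -- lifting to larger systems
  | par {S₁ l S₁' S₂} : RStep L S₁ l S₁' →
      Disjoint (sysPids S₁') (sysPids S₂) → Disjoint (sysTags S₁') (sysTags S₂) →
      Disjoint (sysCks S₁') (sysCks S₂) →
      RStep L (S₁ + S₂) l (S₁' + S₂)


inductive VItem (State : Type) where
  | seq : State → VItem State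
  | send : State → Pid → Tag → VItem State
  | recv : State → Pid → Tag → Val → VItem State
  | spawn : State → Pid → VItem State

inductive VComp (State : Type) where
  | proc : List (VItem State) → Pid → State → VComp State
  | msg : Pid → Pid → Tag → Val → VComp State

abbrev VSys (State : Type) := Multiset (VComp State)

/-- The uncontrolled reversible semantics ⇌ = ⇀ ∪ ↽. -/
inductive VStep (L : LocalSem State) : VSys State → VSys State → Prop where
  | seq {h p s s'} : L.seqS s s' →
      VStep L {VComp.proc h p s} {VComp.proc (.seq s :: h) p s'}
  | send {h p p' l v s s'} : L.sendS s p' v s' →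
      VStep L {VComp.proc h p s} {VComp.msg p p' l v, VComp.proc (.send s p' l :: h) p s'}
  | recv {h p p' l v s s'} : L.recS s v s' →
      VStep L {VComp.msg p' p l v, VComp.proc h p s} {VComp.proc (.recv s p' l v :: h) p s'}
  | spawn {h p p' s s₀ s'} : L.spawnS s s₀ p' s' → p' ≠ p →
      VStep L {VComp.proc h p s} {VComp.proc (.spawn s p' :: h) p s', VComp.proc [] p' s₀}
  | bseq {h p s s'} :
      VStep L {VComp.proc (.seq s :: h) p s'} {VComp.proc h p s}
  | bsend {h p p' l v s s'} :
      VStep L {VComp.msg p p' l v, VComp.proc (.send s p' l :: h) p s'} {VComp.proc h p s}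
  | brec {h p p' l v s s'} :
      VStep L {VComp.proc (.recv s p' l v :: h) p s'} {VComp.msg p' p l v, VComp.proc h p s}
  | bspawn {h p p' s s₀ s'} :
      VStep L {VComp.proc (.spawn s p' :: h) p s', VComp.proc [] p' s₀} {VComp.proc h p s}
  | par {S₁ S₁' S₂} : VStep L S₁ S₁' → VStep L (S₁ + S₂) (S₁' + S₂)


/-- History cleaning: drop check/commit items, keep the rest (dropping the
    checkpoint sets of rec items). -/
def rclean : Hist State → List (VItem State)
  | [] => []
  | .seq s :: h => .seq s :: rclean h
  | .send s p l :: h => .send s p l :: rclean h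
  | .recv _ _ s p l v :: h => .recv s p l v :: rclean h
  | .spawn s p :: h => .spawn s p :: rclean h
  | .check _ _ :: h => rclean h
  | .commit _ _ :: h => rclean h

/-- Projection to the standard semantics; `sbar` is the operation s ↦ s̄ that replaces
    the rollback operators and checkpoint identifiers in a state by `ok`. -/
def staComp (sbar : State → State) : RComp State → SComp State
  | .fwd _ _ _ p s => .proc p (sbar s)
  | .bwd _ _ _ p s _ => .proc p (sbar s)
  | .msg _ p p' _ v => .msg p p' v

def sta (sbar : State → State) (S : RSys State) : SSys State := S.map (staComp sbar)

/-- Projection to the reversible semantics. -/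
def revComp (sbar : State → State) : RComp State → VComp State
  | .fwd _ _ h p s => .proc (rclean h) p (sbar s)
  | .bwd _ _ h p s _ => .proc (rclean h) p (sbar s)
  | .msg _ p p' l v => .msg p p' l v

def revP (sbar : State → State) (S : RSys State) : VSys State := S.map (revComp sbar)

/-- Compatibility of the state projection s̄ with the local semantics: local steps of
    the four standard actions are preserved, and the rollback-operator steps leave
    s̄ unchanged (they only manipulate operators erased by the projection). -/
structure EraseOk (L : LocalSem State) (sbar : State → State) : Prop where
  seq : ∀ {s s'}, L.seqS s s' → L.seqS (sbar s) (sbar s')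
  send : ∀ {s p v s'}, L.sendS s p v s' → L.sendS (sbar s) p v (sbar s')
  recvC : ∀ {s v s'}, L.recS s v s' → L.recS (sbar s) v (sbar s')
  spawn : ∀ {s s₀ p s'}, L.spawnS s s₀ p s' → L.spawnS (sbar s) (sbar s₀) p (sbar s')
  check : ∀ {s τ s'}, L.checkS s τ s' → sbar s' = sbar s
  commit : ∀ {s τ s'}, L.commitS s τ s' → sbar s' = sbar s
  rollback : ∀ {s τ s'}, L.rollbackS s τ s' → sbar s' = sbar s

/-- Labels of the forward rules of the rollback semantics. -/
def isFwdLabel : RLabel → Prop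
  | .seq _ => True
  | .send _ _ => True
  | .recv _ _ => True
  | .spawn _ _ => True
  | .check _ _ => True
  | .commit _ _ => True
  | .delay _ _ => True
  | .rollback _ _ => True
  | _ => False

/-! Each forward rule projects either to the standard rule of the same name (Seq, Send,
Receive, Spawn), because `sbar` commutes with the four local actions, or to an identity:
Check, Commit, Delay and Rollback change only checkpoint data, histories and operators
that `sta` forgets, and commit propagation only erases checkpoint identifiers. The Par
rule survives projection because the pids of a projected system are among the pids of the
rollback system, so disjointness is inherited. -/

@[simp]
lemma sta_add (sbar : State → State) (S₁ S₂ : RSys State) :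
    sta sbar (S₁ + S₂) = sta sbar S₁ + sta sbar S₂ :=
  Multiset.map_add _ _ _

@[simp]
lemma staComp_eraseCk (sbar : State → State) (τ : Ckpt) (c : RComp State) :
    staComp sbar (eraseCk τ c) = staComp sbar c := by
  cases c <;> rfl

lemma RemTau.sta_eq (sbar : State → State) {τ : Ckpt} {R R' : RSys State}
    (h : RemTau τ R R') : sta sbar R = sta sbar R' := by
  induction h with
  | zero => rfl
  | cons hc _ ih =>
    simp only [sta, Multiset.map_cons] at ih ⊢
    rcases hc with rfl | rfl <;> simp [ih]

lemma sids_staComp_subset (sbar : State → State) (c : RComp State) :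
    sids (staComp sbar c) ⊆ compPids c := by
  cases c <;> simp [staComp, sids, compPids]

lemma idsS_sta_subset (sbar : State → State) (S : RSys State) :
    idsS (sta sbar S) ⊆ sysPids S := by
  induction S using Multiset.induction with
  | empty => simp [idsS, sta, sysPids]
  | cons c S ih =>
    simp only [idsS, sta, sysPids, Multiset.map_cons, Multiset.sup_cons] at ih ⊢
    exact Finset.union_subset_union (sids_staComp_subset sbar c) ih

lemma RStep.sta_sstep_or_eq {L : LocalSem State} {sbar : State → State}
    (hE : EraseOk L sbar) {S S' : RSys State} {l : RLabel}
    (h : RStep L S l S') (hf : isFwdLabel l) :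
    (∃ l', SStep L (sta sbar S) l' (sta sbar S')) ∨ sta sbar S = sta sbar S' := by
  induction h with
  | seq hs => exact .inl ⟨_, by simpa [sta, staComp] using SStep.seq (hE.seq hs)⟩
  | send _ hs _ => exact .inl ⟨_, by simpa [sta, staComp] using SStep.send (hE.send hs)⟩
  | recv hs => exact .inl ⟨_, by simpa [sta, staComp] using SStep.recv (hE.recvC hs)⟩
  | spawn hs hne =>
    exact .inl ⟨_, by simpa [sta, staComp] using SStep.spawn (hE.spawn hs) hne⟩
  | check hs _ => exact .inr (by simp [sta, staComp, hE.check hs])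
  | commitDelay hs _ => exact .inr (by simp [sta, staComp, hE.commit hs])
  | rollback hs => exact .inr (by simp [sta, staComp, hE.rollback hs])
  | commit hs _ hrem =>
    exact .inr (by rw [sta_add, sta_add, hrem.sta_eq sbar]; simp [sta, staComp, hE.commit hs])
  | delay _ _ hrem => exact .inr (by rw [sta_add, sta_add, hrem.sta_eq sbar]; rfl)
  | par _ hdis _ _ ih =>
    rcases ih hf with ⟨l', hs⟩ | heq
    · refine .inl ⟨l', ?_⟩
      rw [sta_add, sta_add]
      exact SStep.par hs (hdis.mono (idsS_sta_subset sbar _) (idsS_sta_subset sbar _))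
    · exact .inr (by rw [sta_add, sta_add, heq])
  | bseq | bsend1 | bsend2 | brec1 | brec2 | bspawn1 | bspawn2 | bcheck1 | bcheck2
    | bcommit1 | bcommit2 => nomatch hf

theorem sta_projection_of_forward_derivation_general
    {State : Type} [DecidableEq State] (L : LocalSem State) (sbar : State → State)
    (hE : EraseOk L sbar) (n : ℕ)
    (S : ℕ → RSys State) (lbl : ℕ → RLabel)
    -- it is a derivation under the rollback semantics
    (hstep : ∀ i < n, RStep L (S i) (lbl i) (S (i + 1)))
    -- applying only forward rules
    (hfwd : ∀ i < n, isFwdLabel (lbl i)) :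
    -- each projected step is a standard step or an identity
    ∀ i < n, (∃ l, SStep L (sta sbar (S i)) l (sta sbar (S (i + 1)))) ∨
      sta sbar (S i) = sta sbar (S (i + 1)) :=
  fun i hi => (hstep i hi).sta_sstep_or_eq hE (hfwd i hi)

theorem sta_projection_of_forward_derivation
    {State : Type} [DecidableEq State] (L : LocalSem State) (sbar : State → State)
    (hE : EraseOk L sbar) (n : ℕ)
    (S : ℕ → RSys State) (lbl : ℕ → RLabel)
    -- the derivation starts from an initial system
    (h0 : ∃ (p : Pid) (s : State), S 0 = {RComp.fwd ∅ ∅ [] p s})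
    -- it is a derivation under the rollback semantics
    (hstep : ∀ i < n, RStep L (S i) (lbl i) (S (i + 1)))
    -- applying only forward rules
    (hfwd : ∀ i < n, isFwdLabel (lbl i)) :
    -- each projected step is a standard step or an identity
    ∀ i < n, (∃ l, SStep L (sta sbar (S i)) l (sta sbar (S (i + 1)))) ∨
      sta sbar (S i) = sta sbar (S (i + 1)) :=
  sta_projection_of_forward_derivation_general L sbar hE n S lbl hstep hfwd
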